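/- Let T be a transit cluster in a DAG G and let G' be the graph induced by clustering T into vertex t. If there is a directed path from u to v in G' (u, v ≠ t), then there is a directed path from u to v in G. -/
import Mathlib


variable {α : Type*}

/-- All edges lie within the vertex set `V`. -/
def EdgesIn (V : Set α) (E : α → α → Prop) : Prop :=
  ∀ u v, E u v → u ∈ V ∧ v ∈ V

/-- The edge relation has no directed cycles. -/
def Acyclic (E : α → α → Prop) : Prop :=
  ∀ v, ¬ Relation.TransGen E v v

/-- A finite directed acyclic graph on vertex set `V`. -/
def IsDAG (V : Set α) (E : α → α → Prop) : Prop :=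
  V.Finite ∧ EdgesIn V E ∧ Acyclic E

/-- Receivers of `T`: members of `T` with a parent outside `T`. -/
def recs (E : α → α → Prop) (T : Set α) : Set α :=
  {v | v ∈ T ∧ ∃ u, u ∉ T ∧ E u v}

/-- Emitters of `T`: members of `T` with a child outside `T`. -/
def emis (E : α → α → Prop) (T : Set α) : Set α :=
  {v | v ∈ T ∧ ∃ u, u ∉ T ∧ E v u}

/-- Edges of `G[T^=]`: the subgraph induced by `T` with incoming edges of
receivers and outgoing edges of emitters removed. -/
def CutEdge (E : α → α → Prop) (T : Set α) (u v : α) : Prop :=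
  u ∈ T ∧ v ∈ T ∧ E u v ∧ v ∉ recs E T ∧ u ∉ emis E T

/-- Undirected reachability with respect to an edge relation. -/
def UndirReach (E : α → α → Prop) (u v : α) : Prop :=
  Relation.ReflTransGen (fun a b => E a b ∨ E b a) u v

/-- `T` is a transit cluster in the graph `(V, E)`. -/
def IsTransitCluster (V : Set α) (E : α → α → Prop) (T : Set α) : Prop :=
  T.Nonempty ∧ T ⊂ V ∧
  (∀ r₁ ∈ recs E T, ∀ r₂ ∈ recs E T,
    {u | u ∉ T ∧ E u r₁} = {u | u ∉ T ∧ E u r₂}) ∧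
  (∀ e₁ ∈ emis E T, ∀ e₂ ∈ emis E T,
    {u | u ∉ T ∧ E e₁ u} = {u | u ∉ T ∧ E e₂ u}) ∧
  (∀ x ∈ T, ∃ w, (w ∈ recs E T ∨ w ∈ emis E T) ∧ UndirReach (CutEdge E T) x w) ∧
  ((emis E T).Nonempty → ∀ r ∈ recs E T, ∃ e ∈ emis E T, Relation.ReflTransGen E r e) ∧
  ((recs E T).Nonempty → ∀ e ∈ emis E T, ∃ r ∈ recs E T, Relation.ReflTransGen E r e)

/-- Vertex set of the graph obtained by clustering `T` into the new vertex `t`. -/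
def ClusterVerts (V T : Set α) (t : α) : Set α := (V \ T) ∪ {t}

/-- Edge relation of the graph obtained by clustering `T` into the new vertex `t`:
edges not touching `T` are kept, the parents of `t` are the external parents of
`recs T`, and the children of `t` are the external children of `emis T`. -/
def ClusterEdge (E : α → α → Prop) (T : Set α) (t : α) (u v : α) : Prop :=
  (u ∉ T ∧ v ∉ T ∧ E u v) ∨
  (u ∉ T ∧ u ≠ t ∧ v = t ∧ ∃ r ∈ recs E T, E u r) ∨
  (u = t ∧ v ∉ T ∧ v ≠ t ∧ ∃ e ∈ emis E T, E e v)

/-- A transit component: a transit cluster that is connected (undirectedly)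
in the subgraph it induces. -/
def IsTransitComponent (V : Set α) (E : α → α → Prop) (T : Set α) : Prop :=
  IsTransitCluster V E T ∧
  ∀ u ∈ T, ∀ v ∈ T, UndirReach (fun a b => a ∈ T ∧ b ∈ T ∧ E a b) u v

/-- a directed path in the clustered graph between vertices other
than `t` yields a directed path in the original graph. -/
theorem directed_path_of_cluster_path
    (V : Set α) (E : α → α → Prop) (T : Set α) (t : α) (u v : α)
    (hdag : IsDAG V E)
    (ht : t ∉ V)
    (hT : IsTransitCluster V E T)
    (hu : u ≠ t) (hv : v ≠ t)
    (h : Relation.TransGen (ClusterEdge E T t) u v) :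
    Relation.TransGen E u v := by
  obtain ⟨-, -, -, hc4, -, hc6, -⟩ := hT
  have key : ∀ w, Relation.TransGen (ClusterEdge E T t) u w →
      (w ≠ t → Relation.TransGen E u w) ∧
      (w = t → ∃ r ∈ recs E T, Relation.TransGen E u r) := by
    intro w hw
    induction hw with
    | single h1 =>
      rcases h1 with ⟨-, -, he⟩ | ⟨-, -, hwt, r, hr, he⟩ | ⟨hut, -, -, -⟩
      · exact ⟨fun _ => Relation.TransGen.single he, fun hwt => absurd hwt (by
          rintro rfl
          exact hu (by
            have := (hdag.2.1 _ _ he).2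
            exact absurd this ht))⟩
      · exact ⟨fun hwt' => absurd hwt hwt', fun _ => ⟨r, hr, Relation.TransGen.single he⟩⟩
      · exact absurd hut hu
    | tail hab h1 ih =>
      rename_i b c
      by_cases hbt : b = t
      · subst hbt
        obtain ⟨r, hr, hur⟩ := (ih).2 rfl
        rcases h1 with ⟨hnt, -, he⟩ | ⟨-, hne, -, -⟩ | ⟨-, hcT, hct, e, he, hec⟩
        · exact absurd (hdag.2.1 _ _ he).1 fun hV => ht hV
        · exact absurd rfl hne
        · -- emis nonempty, so r reaches some emitter e', which has the same
          -- external children as e, in particular c.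
          obtain ⟨e', he', hre'⟩ := hc6 ⟨e, he⟩ r hr
          have hce : c ∈ {x | x ∉ T ∧ E e x} := ⟨hcT, hec⟩
          have hce' : c ∈ {x | x ∉ T ∧ E e' x} :=
            (Set.ext_iff.mp (hc4 e he e' he') c).mp hce
          have huc : Relation.TransGen E u c :=
            Relation.TransGen.tail (hur.trans_left hre') hce'.2
          exact ⟨fun _ => huc, fun hct' => absurd hct' hct⟩
      · have hub : Relation.TransGen E u b := ih.1 hbt
        rcases h1 with ⟨-, -, he⟩ | ⟨-, -, hct, r, hr, he⟩ | ⟨hbt', -, -, -⟩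
        · refine ⟨fun _ => hub.tail he, fun hct => ?_⟩
          subst hct
          exact absurd (hdag.2.1 _ _ he).2 ht
        · exact ⟨fun h' => absurd hct h', fun _ => ⟨r, hr, hub.tail he⟩⟩
        · exact absurd hbt' hbt
  exact (key v h).1 hv
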